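/- arXiv:1811.03250 — 4 statements merged into one kernel-verified Lean document; each statement's English description precedes it below -/
import Mathlib

section
/- Let D_tr and D_te be disjoint nonempty finite subsets of α with D = D_tr ∪ D_te. If two classifiers h₁, h₂ : α → β satisfy A(h₁, D) ≤ A(h₂, D) and A(h₂, D_tr) ≤ A(h₁, D_tr), then A(h₁, D_te) ≤ A(h₂, D_te). -/
/-- Accuracy of a classifier `h` on a finite dataset `D`, with ground-truth labeling `y`. -/
noncomputable def acc {α β : Type*} [DecidableEq β] (y : α → β) (h : α → β) (D : Finset α) : ℝ :=
  ((D.filter fun z => h z = y z).card : ℝ) / D.card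

theorem fitness_implies_test_accuracy_le {α β : Type*} [DecidableEq α] [DecidableEq β]
    (y : α → β) (Dtr Dte D : Finset α)
    (htr : Dtr.Nonempty) (hte : Dte.Nonempty) (hdisj : Disjoint Dtr Dte)
    (hD : D = Dtr ∪ Dte)
    (h₁ h₂ : α → β)
    (hfull : acc y h₁ D ≤ acc y h₂ D)
    (htrain : acc y h₂ Dtr ≤ acc y h₁ Dtr) :
    acc y h₁ Dte ≤ acc y h₂ Dte := by
  have hcardD : D.card = Dtr.card + Dte.card := by
    rw [hD, Finset.card_union_of_disjoint hdisj]
  have hDpos : (0:ℝ) < D.card := by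
    rw [hcardD]; push_cast
    have := htr.card_pos
    have := hte.card_pos
    positivity
  have htrpos : (0:ℝ) < Dtr.card := by exact_mod_cast htr.card_pos
  have htepos : (0:ℝ) < Dte.card := by exact_mod_cast hte.card_pos
  have hsplit : ∀ h : α → β,
      (D.filter fun z => h z = y z).card =
      (Dtr.filter fun z => h z = y z).card + (Dte.filter fun z => h z = y z).card := by
    intro h
    rw [hD, Finset.filter_union, Finset.card_union_of_disjoint
      (Finset.disjoint_filter_filter hdisj)]
  set a1 := (Dtr.filter fun z => h₁ z = y z).card with ha1
  set a2 := (Dtr.filter fun z => h₂ z = y z).card with ha2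
  set b1 := (Dte.filter fun z => h₁ z = y z).card with hb1
  set b2 := (Dte.filter fun z => h₂ z = y z).card with hb2
  have hfull' : (a1:ℝ) + b1 ≤ (a2:ℝ) + b2 := by
    have := (div_le_div_iff₀ hDpos hDpos).mp hfull
    rw [hsplit h₁, hsplit h₂] at this
    push_cast at this ⊢
    nlinarith
  have htrain' : (a2:ℝ) ≤ a1 := by
    have := (div_le_div_iff₀ htrpos htrpos).mp htrain
    nlinarith
  have hb : (b1:ℝ) ≤ b2 := by linarith
  unfold acc
  gcongr
end

section
/- (Deterministic core of the Upper Bound theorem.) Let D_tr and D_te be disjoint nonempty finite subsets of α with D = D_tr ∪ D_te, and let S_tr be a nonempty finite subset of α. Let h_tr, h*, h_S : α → β be classifiers and ε₁, ε₂ real numbers. Assume the fitness inequalities A(h*, D_tr) ≤ A(h_tr, D_tr), A(h_tr, D) ≤ A(h*, D), and A(h*, S_tr) ≤ A(h_S, S_tr), and assume the deviation bounds A(h*, D_te) − A(h*, D) ≤ ε₁ and A(h*, D) − A(h*, S_tr) ≤ ε₂. Then A(h_tr, D_te) ≤ A(h_S, S_tr) + ε₁ + ε₂. -/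
lemma acc_union_split {α β : Type*} [DecidableEq α] [DecidableEq β]
    (y h : α → β) (A B : Finset α) (hA : A.Nonempty) (hB : B.Nonempty)
    (hdisj : Disjoint A B) :
    acc y h (A ∪ B) * ((A.card : ℝ) + B.card)
      = acc y h A * A.card + acc y h B * B.card := by
  have hcard : ((A ∪ B).filter fun z => h z = y z).card
      = (A.filter fun z => h z = y z).card + (B.filter fun z => h z = y z).card := by
    rw [Finset.filter_union, Finset.card_union_of_disjoint (Finset.disjoint_filter_filter hdisj)]
  have hcardU : (A ∪ B).card = A.card + B.card := Finset.card_union_of_disjoint hdisj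
  have hA0 : (A.card : ℝ) ≠ 0 := Nat.cast_ne_zero.mpr (Finset.card_pos.mpr hA).ne'
  have hB0 : (B.card : ℝ) ≠ 0 := Nat.cast_ne_zero.mpr (Finset.card_pos.mpr hB).ne'
  have hAB0 : (A.card : ℝ) + B.card ≠ 0 := by positivity
  unfold acc
  rw [hcard, hcardU]
  push_cast
  field_simp

theorem upper_bound_deterministic_core {α β : Type*} [DecidableEq α] [DecidableEq β]
    (y : α → β) (Dtr Dte D Str : Finset α)
    (htr : Dtr.Nonempty) (hte : Dte.Nonempty) (hS : Str.Nonempty)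
    (hdisj : Disjoint Dtr Dte) (hD : D = Dtr ∪ Dte)
    (h_tr h_star h_S : α → β) (ε₁ ε₂ : ℝ)
    (hfit₁ : acc y h_star Dtr ≤ acc y h_tr Dtr)
    (hfit₂ : acc y h_tr D ≤ acc y h_star D)
    (hfit₃ : acc y h_star Str ≤ acc y h_S Str)
    (hdev₁ : acc y h_star Dte - acc y h_star D ≤ ε₁)
    (hdev₂ : acc y h_star D - acc y h_star Str ≤ ε₂) :
    acc y h_tr Dte ≤ acc y h_S Str + ε₁ + ε₂ := by
  subst hD
  have h1 := acc_union_split y h_tr Dtr Dte htr hte hdisj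
  have h2 := acc_union_split y h_star Dtr Dte htr hte hdisj
  have htrpos : (0:ℝ) < Dtr.card := by exact_mod_cast Finset.card_pos.mpr htr
  have htepos : (0:ℝ) < Dte.card := by exact_mod_cast Finset.card_pos.mpr hte
  have hsum : (0:ℝ) < (Dtr.card : ℝ) + Dte.card := by linarith
  -- key: acc y h_tr Dte ≤ acc y h_star Dte
  have key : acc y h_tr Dte ≤ acc y h_star Dte := by
    have := mul_le_mul_of_nonneg_right hfit₂ hsum.le
    rw [h1, h2] at this
    nlinarith [mul_le_mul_of_nonneg_right hfit₁ htrpos.le]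
  linarith
end

section
/- (4-approximation of geometric scheduling with optimal step size.) Let α > 0, s₁ > 0, let c = 2^{1/α}, let m ≥ 2 be an integer, and let s* be a real number with s* > c^{m−2}·s₁. Then Σ_{j=1}^{m} (c^{j−1}·s₁)^α < 4·(s*)^α. -/
theorem geometric_scheduling_four_approx (α : ℝ) (hα : 0 < α)
    (s₁ : ℝ) (hs₁ : 0 < s₁)
    (c : ℝ) (hc : c = (2 : ℝ) ^ (1 / α))
    (m : ℕ) (hm : 2 ≤ m)
    (sstar : ℝ) (hsstar : c ^ (m - 2) * s₁ < sstar) :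
    ∑ j ∈ Finset.range m, (c ^ j * s₁) ^ α < 4 * sstar ^ α := by
  have hc0 : 0 < c := hc ▸ Real.rpow_pos_of_pos (by norm_num) _
  have h2α : c ^ α = 2 := by
    rw [hc, ← Real.rpow_mul (by norm_num), one_div, inv_mul_cancel₀ hα.ne', Real.rpow_one]
  have key : ∀ n : ℕ, (c ^ n * s₁) ^ α = 2 ^ n * s₁ ^ α := by
    intro n
    rw [Real.mul_rpow (pow_nonneg hc0.le n) hs₁.le, ← Real.rpow_natCast c n,
      ← Real.rpow_mul hc0.le, mul_comm (n:ℝ) α, Real.rpow_mul hc0.le, h2α, Real.rpow_natCast]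
  have h1 : ∑ j ∈ Finset.range m, (c ^ j * s₁) ^ α = (2 ^ m - 1) * s₁ ^ α := by
    simp only [key]
    rw [← Finset.sum_mul, geom_sum_eq (by norm_num : (2:ℝ) ≠ 1)]
    norm_num
  have h2 : (c ^ (m - 2) * s₁) ^ α = 2 ^ (m - 2) * s₁ ^ α := key _
  have h3 : (c ^ (m - 2) * s₁) ^ α < sstar ^ α :=
    Real.rpow_lt_rpow (by positivity) hsstar hα
  have h4 : (2:ℝ) ^ m = 4 * 2 ^ (m - 2) := by
    have : m - 2 + 2 = m := Nat.sub_add_cancel hm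
    nth_rewrite 1 [← this]
    rw [pow_add]; ring
  rw [h1]
  calc (2 ^ m - 1) * s₁ ^ α < 2 ^ m * s₁ ^ α := by
        have : 0 < s₁ ^ α := Real.rpow_pos_of_pos hs₁ _
        nlinarith
    _ = 4 * ((c ^ (m - 2) * s₁) ^ α) := by rw [h2, h4]; ring
    _ < 4 * sstar ^ α := by linarith
end

section
/- (Accumulated time of geometric scheduling is a constant factor of the optimal time.) Let α > 0, c > 1, s₁ > 0, let m ≥ 2 be an integer, and let s* be a real number with s* ≥ c^{m−2}·s₁. Then Σ_{j=1}^{m} (c^{j−1}·s₁)^α ≤ (c^{2α}/(c^α − 1))·(s*)^α. -/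
theorem geometric_scheduling_constant_factor (α : ℝ) (hα : 0 < α)
    (c : ℝ) (hc : 1 < c) (s₁ : ℝ) (hs₁ : 0 < s₁)
    (m : ℕ) (hm : 2 ≤ m)
    (sstar : ℝ) (hsstar : c ^ (m - 2) * s₁ ≤ sstar) :
    ∑ j ∈ Finset.range m, (c ^ j * s₁) ^ α ≤
      c ^ (2 * α) / (c ^ α - 1) * sstar ^ α := by
  have hc0 : (0:ℝ) < c := lt_trans one_pos hc
  set r : ℝ := c ^ α with hr
  have hr1 : 1 < r := Real.one_lt_rpow_iff_of_pos hc0 |>.2 (Or.inl ⟨hc, hα⟩)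
  have hr0 : 0 < r := lt_trans one_pos hr1
  have hterm : ∀ j, (c ^ j * s₁) ^ α = r ^ j * s₁ ^ α := by
    intro j
    rw [Real.mul_rpow (by positivity) hs₁.le, ← Real.rpow_natCast c j,
      ← Real.rpow_natCast r j, hr, ← Real.rpow_mul hc0.le, ← Real.rpow_mul hc0.le,
      mul_comm α, mul_comm]
  have hsum : ∑ j ∈ Finset.range m, (c ^ j * s₁) ^ α
      = (r ^ m - 1) / (r - 1) * s₁ ^ α := by
    simp_rw [hterm, ← Finset.sum_mul, geom_sum_eq (ne_of_gt hr1)]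
  have hc2 : c ^ (2 * α) = r ^ 2 := by
    rw [hr, mul_comm, Real.rpow_mul hc0.le, Real.rpow_two]
  have hs2 : r ^ (m - 2) * s₁ ^ α ≤ sstar ^ α := by
    have h1 : (c ^ (m - 2) * s₁) ^ α ≤ sstar ^ α :=
      Real.rpow_le_rpow (by positivity) hsstar hα.le
    calc r ^ (m - 2) * s₁ ^ α = (c ^ (m - 2) * s₁) ^ α := (hterm (m - 2)).symm
      _ ≤ sstar ^ α := h1
  rw [hsum, hc2]
  have hrm : r ^ 2 * r ^ (m - 2) = r ^ m := by
    rw [← pow_add]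
    congr 1
    omega
  have hs1a : (0:ℝ) < s₁ ^ α := Real.rpow_pos_of_pos hs₁ α
  have hsub : (0:ℝ) < r - 1 := by linarith
  rw [div_mul_eq_mul_div, div_mul_eq_mul_div, div_le_div_iff₀ hsub hsub]
  have h3 : r ^ 2 * (r ^ (m - 2) * s₁ ^ α) ≤ r ^ 2 * sstar ^ α :=
    mul_le_mul_of_nonneg_left hs2 (by positivity)
  have hrmpos : (0:ℝ) < r ^ m := pow_pos hr0 m
  nlinarith [mul_pos hs1a hsub]
end
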